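/- arXiv:2309.02565 — 3 statements merged into one kernel-verified Lean document; each statement's English description precedes it below -/
import Mathlib

section
/- Let A and B be finite connected simple graphs, let a₁, a₂ be vertices of A with d_A(a₁, a₂) = 2, and let b be any vertex of B. Then the number of edges of the Cartesian product A □ B that are closer to the vertex (a₁, b) than to the vertex (a₂, b) equals m^A_{a₁2a₂} · |V(B)| + n^A_{a₁2a₂} · |E(B)|, where m^A_{a₁2a₂} is the number of edges f of A with d(a₁, f) < d(a₂, f) and n^A_{a₁2a₂} is the number of vertices a of A with d(a, a₁) < d(a, a₂). -/
open SimpleGraph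

/-- Distance from a vertex to an edge (as an unordered pair): the minimum of
the distances to the two endpoints. -/
noncomputable def eDist {V : Type*} (G : SimpleGraph V) (g : V) (f : Sym2 V) : ℕ :=
  Sym2.lift ⟨fun x y => min (G.dist g x) (G.dist g y), fun _ _ => min_comm _ _⟩ f

/-- The number of edges of `G` that are closer to `g` than to `h`. -/
noncomputable def mCloser {V : Type*} (G : SimpleGraph V) (g h : V) : ℕ :=
  {f ∈ G.edgeSet | eDist G g f < eDist G h f}.ncard

/-- The number of vertices of `G` that are closer to `g` than to `h`. -/
noncomputable def nCloser {V : Type*} (G : SimpleGraph V) (g h : V) : ℕ :=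
  {a : V | G.dist a g < G.dist a h}.ncard

/-!
Distances in `A □ B` add coordinatewise, and every edge of `A □ B` lies either in a layer
`α × {c}`, as a copy of an edge `f` of `A`, or in a layer `{a} × β`, as a copy of an edge of
`B`. In the first case the term `d_B(b, c)` is common to the distances from `(a₁, b)` and
`(a₂, b)`, so the edge is closer to `(a₁, b)` exactly when `f` is closer to `a₁`; in the second
case the `B`-term cancels and the condition is `d(a, a₁) < d(a, a₂)`.
-/

@[simp]
lemma eDist_mk {V : Type*} (G : SimpleGraph V) (g x y : V) :
    eDist G g s(x, y) = min (G.dist g x) (G.dist g y) := rfl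

section Layers

variable {α β : Type*}

def layerEdgeLeft (p : Sym2 α × β) : Sym2 (α × β) := p.1.map (·, p.2)

def layerEdgeRight (p : α × Sym2 β) : Sym2 (α × β) := p.2.map (p.1, ·)

lemma map_fst_layerEdgeLeft (p : Sym2 α × β) : (layerEdgeLeft p).map Prod.fst = p.1 := by
  simp [layerEdgeLeft, Sym2.map_map]

lemma map_snd_layerEdgeLeft (p : Sym2 α × β) :
    (layerEdgeLeft p).map Prod.snd = Sym2.diag p.2 := by
  obtain ⟨f, c⟩ := p
  induction f using Sym2.ind with
  | _ x y => rfl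

lemma map_fst_layerEdgeRight (p : α × Sym2 β) :
    (layerEdgeRight p).map Prod.fst = Sym2.diag p.1 := by
  obtain ⟨c, f⟩ := p
  induction f using Sym2.ind with
  | _ x y => rfl

lemma map_snd_layerEdgeRight (p : α × Sym2 β) : (layerEdgeRight p).map Prod.snd = p.2 := by
  simp [layerEdgeRight, Sym2.map_map]

lemma layerEdgeLeft_injective : Function.Injective (layerEdgeLeft : Sym2 α × β → _) := by
  intro p q h
  have h₁ := congrArg (Sym2.map Prod.fst) h
  have h₂ := congrArg (Sym2.map Prod.snd) h
  rw [map_fst_layerEdgeLeft, map_fst_layerEdgeLeft] at h₁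
  rw [map_snd_layerEdgeLeft, map_snd_layerEdgeLeft] at h₂
  exact Prod.ext h₁ (Sym2.diag_injective h₂)

lemma layerEdgeRight_injective : Function.Injective (layerEdgeRight : α × Sym2 β → _) := by
  intro p q h
  have h₁ := congrArg (Sym2.map Prod.fst) h
  have h₂ := congrArg (Sym2.map Prod.snd) h
  rw [map_fst_layerEdgeRight, map_fst_layerEdgeRight] at h₁
  rw [map_snd_layerEdgeRight, map_snd_layerEdgeRight] at h₂
  exact Prod.ext (Sym2.diag_injective h₁) h₂

lemma layerEdgeLeft_ne_layerEdgeRight {p : Sym2 α × β} (hp : ¬p.1.IsDiag) (q : α × Sym2 β) :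
    layerEdgeLeft p ≠ layerEdgeRight q := by
  intro h
  have := congrArg (Sym2.map Prod.fst) h
  rw [map_fst_layerEdgeLeft, map_fst_layerEdgeRight] at this
  exact hp (this ▸ Sym2.diag_isDiag q.1)

end Layers

namespace SimpleGraph

variable {α β : Type*} {A : SimpleGraph α} {B : SimpleGraph β}

lemma dist_boxProd {x y : α × β} (hA : A.Reachable x.1 y.1) (hB : B.Reachable x.2 y.2) :
    (A □ B).dist x y = A.dist x.1 y.1 + B.dist x.2 y.2 := by
  simp only [dist, edist_boxProd]
  exact ENat.toNat_add (edist_ne_top_iff_reachable.2 hA) (edist_ne_top_iff_reachable.2 hB)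

lemma edgeSet_boxProd :
    (A □ B).edgeSet =
      layerEdgeLeft '' {p | p.1 ∈ A.edgeSet} ∪ layerEdgeRight '' {p | p.2 ∈ B.edgeSet} := by
  ext e
  induction e using Sym2.ind with
  | _ x y =>
    obtain ⟨x₁, x₂⟩ := x
    obtain ⟨y₁, y₂⟩ := y
    constructor
    · rw [mem_edgeSet, boxProd_adj]
      rintro (⟨h, rfl : x₂ = y₂⟩ | ⟨h, rfl : x₁ = y₁⟩)
      · exact Or.inl ⟨(s(x₁, y₁), x₂), h, rfl⟩
      · exact Or.inr ⟨(x₁, s(x₂, y₂)), h, rfl⟩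
    · rintro (⟨⟨f, c⟩, hf, he⟩ | ⟨⟨c, f⟩, hf, he⟩) <;> rw [← he] <;>
        induction f using Sym2.ind <;> simp_all [layerEdgeLeft, layerEdgeRight, boxProd_adj]

lemma ncard_sep_edgeSet_boxProd [Finite α] [Finite β] (P : Sym2 (α × β) → Prop) :
    {e ∈ (A □ B).edgeSet | P e}.ncard =
      {p | p.1 ∈ A.edgeSet ∧ P (layerEdgeLeft p)}.ncard +
        {p | p.2 ∈ B.edgeSet ∧ P (layerEdgeRight p)}.ncard := by
  have hsplit : {e ∈ (A □ B).edgeSet | P e} =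
      layerEdgeLeft '' {p | p.1 ∈ A.edgeSet ∧ P (layerEdgeLeft p)} ∪
        layerEdgeRight '' {p | p.2 ∈ B.edgeSet ∧ P (layerEdgeRight p)} := by
    ext e
    rw [edgeSet_boxProd]
    aesop
  have hdisj : Disjoint (layerEdgeLeft '' {p | p.1 ∈ A.edgeSet ∧ P (layerEdgeLeft p)})
      (layerEdgeRight '' {p | p.2 ∈ B.edgeSet ∧ P (layerEdgeRight p)}) := by
    rw [Set.disjoint_left]
    rintro _ ⟨p, hp, rfl⟩ ⟨q, -, hq⟩
    exact layerEdgeLeft_ne_layerEdgeRight (A.not_isDiag_of_mem_edgeSet hp.1) q hq.symm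
  rw [hsplit, Set.ncard_union_eq hdisj, Set.ncard_image_of_injective _ layerEdgeLeft_injective,
    Set.ncard_image_of_injective _ layerEdgeRight_injective]

lemma eDist_boxProd_layerEdgeLeft (hA : A.Connected) (hB : B.Connected) (a : α) (b : β)
    (p : Sym2 α × β) :
    eDist (A □ B) (a, b) (layerEdgeLeft p) = eDist A a p.1 + B.dist b p.2 := by
  obtain ⟨f, c⟩ := p
  induction f using Sym2.ind with
  | _ x y => simp [layerEdgeLeft, dist_boxProd (hA _ _) (hB _ _), min_add_add_right]

lemma eDist_boxProd_layerEdgeRight (hA : A.Connected) (hB : B.Connected) (a : α) (b : β)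
    (p : α × Sym2 β) :
    eDist (A □ B) (a, b) (layerEdgeRight p) = A.dist a p.1 + eDist B b p.2 := by
  obtain ⟨c, f⟩ := p
  induction f using Sym2.ind with
  | _ x y => simp [layerEdgeRight, dist_boxProd (hA _ _) (hB _ _), min_add_add_left]

end SimpleGraph

theorem boxProd_mCloser_left_general {α β : Type*} [Fintype α] [Fintype β]
    (A : SimpleGraph α) (B : SimpleGraph β)
    (hA : A.Connected) (hB : B.Connected)
    (a₁ a₂ : α) (b : β) :
    mCloser (A.boxProd B) (a₁, b) (a₂, b) =
      mCloser A a₁ a₂ * Fintype.card β + nCloser A a₁ a₂ * B.edgeSet.ncard := by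
  have hleft : {p : Sym2 α × β | p.1 ∈ A.edgeSet ∧
      eDist (A □ B) (a₁, b) (layerEdgeLeft p) < eDist (A □ B) (a₂, b) (layerEdgeLeft p)} =
      {f ∈ A.edgeSet | eDist A a₁ f < eDist A a₂ f} ×ˢ Set.univ := by
    ext p
    simp [eDist_boxProd_layerEdgeLeft hA hB]
  have hright : {p : α × Sym2 β | p.2 ∈ B.edgeSet ∧
      eDist (A □ B) (a₁, b) (layerEdgeRight p) < eDist (A □ B) (a₂, b) (layerEdgeRight p)} =
      {a | A.dist a a₁ < A.dist a a₂} ×ˢ B.edgeSet := by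
    ext p
    simp [eDist_boxProd_layerEdgeRight hA hB, dist_comm, and_comm]
  unfold mCloser nCloser
  rw [ncard_sep_edgeSet_boxProd, hleft, hright, Set.ncard_prod, Set.ncard_prod, Set.ncard_univ,
    Nat.card_eq_fintype_card]

theorem boxProd_mCloser_left {α β : Type*} [Fintype α] [Fintype β]
    (A : SimpleGraph α) (B : SimpleGraph β)
    (hA : A.Connected) (hB : B.Connected)
    (a₁ a₂ : α) (h : A.dist a₁ a₂ = 2) (b : β) :
    mCloser (A.boxProd B) (a₁, b) (a₂, b) =
      mCloser A a₁ a₂ * Fintype.card β + nCloser A a₁ a₂ * B.edgeSet.ncard :=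
  boxProd_mCloser_left_general A B hA hB a₁ a₂ b
end

section
/- For every integer n > 1, the friendship graph F_n is 2-edge distance-balanced. -/
open SimpleGraph

/-- `G` is 2-edge distance-balanced. -/
def TwoEDB {V : Type*} (G : SimpleGraph V) : Prop :=
  ∀ g h : V, G.dist g h = 2 → mCloser G g h = mCloser G h g

/-- The friendship graph `F n`: `n` triangles all sharing one common hub vertex `none`.
The vertex `some (i, j)` (`j : Fin 2`) is one of the two outer vertices of the `i`-th
triangle: the hub is adjacent to every outer vertex, and `some (i, 0)` is adjacent to
`some (i, 1)` for each `i`, with no other edges. -/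
def friendshipGraph (n : ℕ) : SimpleGraph (Option (Fin n × Fin 2)) where
  Adj x y := x ≠ y ∧
    (x = none ∨ y = none ∨ ∃ p q, x = some p ∧ y = some q ∧ p.1 = q.1)
  symm := by
    constructor
    rintro x y ⟨hne, h | h | ⟨p, q, hx, hy, h⟩⟩
    · exact ⟨hne.symm, Or.inr (Or.inl h)⟩
    · exact ⟨hne.symm, Or.inl h⟩
    · exact ⟨hne.symm, Or.inr (Or.inr ⟨q, p, hy, hx, h.symm⟩)⟩
  loopless := by constructor; rintro x ⟨hne, -⟩; exact hne rfl

/-! Any two outer vertices of `F n` are exchanged by an automorphism (swap their triangles,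
matching the two vertices), and `m_{g2h}` is invariant under automorphisms, so
`m_{g2h} = m_{h2g}`. Every pair at distance 2 consists of outer vertices, since the hub
is adjacent to everything. -/

namespace SimpleGraph

variable {V W : Type*} {G : SimpleGraph V} {H : SimpleGraph W}

lemma Hom.edist_map_le (f : G →g H) (u v : V) : H.edist (f u) (f v) ≤ G.edist u v := by
  by_cases hr : G.Reachable u v
  · obtain ⟨p, hp⟩ := hr.exists_walk_length_eq_edist
    rw [← hp, ← Walk.length_map f p]
    exact edist_le _
  · rw [edist_eq_top_of_not_reachable hr]
    exact le_top

lemma Iso.edist_map (φ : G ≃g H) (u v : V) : H.edist (φ u) (φ v) = G.edist u v :=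
  le_antisymm (Hom.edist_map_le φ.toHom u v) <| by
    simpa using Hom.edist_map_le φ.symm.toHom (φ u) (φ v)

lemma Iso.dist_map (φ : G ≃g H) (u v : V) : H.dist (φ u) (φ v) = G.dist u v := by
  rw [dist, dist, Iso.edist_map]

end SimpleGraph

section EdgeDistance

variable {V W : Type*} {G : SimpleGraph V} {H : SimpleGraph W}

lemma eDist_map_iso (φ : G ≃g H) (g : V) (f : Sym2 V) :
    eDist H (φ g) (f.map φ) = eDist G g f := by
  induction f using Sym2.ind with
  | _ x y => simp only [eDist, Sym2.map_mk, Sym2.lift_mk, Iso.dist_map]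

lemma mCloser_map_iso (φ : G ≃g H) (g h : V) : mCloser H (φ g) (φ h) = mCloser G g h := by
  have hpre : {f ∈ G.edgeSet | eDist G g f < eDist G h f} =
      Sym2.map φ ⁻¹' {f ∈ H.edgeSet | eDist H (φ g) f < eDist H (φ h) f} := by
    ext f
    simp only [Set.mem_sep_iff, Set.mem_preimage, Iso.map_mem_edgeSet_iff, eDist_map_iso]
  rw [mCloser, mCloser, hpre, Set.ncard_preimage_of_injective_subset_range
    (Sym2.map.injective φ.injective) fun f _ => ⟨f.map φ.symm, by simp [Sym2.map_map]⟩]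

lemma mCloser_comm_of_iso_swap {g h : V} (φ : G ≃g G) (hg : φ g = h) (hh : φ h = g) :
    mCloser G g h = mCloser G h g := by
  rw [← mCloser_map_iso φ g h, hg, hh]

end EdgeDistance

namespace friendshipGraph

variable {n : ℕ}

lemma adj_none_some (p : Fin n × Fin 2) : (friendshipGraph n).Adj none (some p) :=
  ⟨by simp, Or.inl rfl⟩

lemma adj_some_some_iff {p q : Fin n × Fin 2} :
    (friendshipGraph n).Adj (some p) (some q) ↔ p ≠ q ∧ p.1 = q.1 := by
  simp only [friendshipGraph, ne_eq, Option.some.injEq, reduceCtorEq, false_or, exists_and_left,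
    exists_eq_left']

lemma dist_none_le_one (v : Option (Fin n × Fin 2)) : (friendshipGraph n).dist none v ≤ 1 := by
  cases v with
  | none => simp
  | some p => exact (dist_eq_one_iff_adj.2 (adj_none_some p)).le

def autOfPermPreservingFst (π : Equiv.Perm (Fin n × Fin 2))
    (hπ : ∀ p q, (π p).1 = (π q).1 ↔ p.1 = q.1) : friendshipGraph n ≃g friendshipGraph n where
  toEquiv := π.optionCongr
  map_rel_iff' := by
    rintro (_ | p) (_ | q) <;> simp [adj_none_some, (adj_none_some _).symm, adj_some_some_iff, hπ]

lemma exists_iso_swap_some (p q : Fin n × Fin 2) :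
    ∃ φ : friendshipGraph n ≃g friendshipGraph n, φ (some p) = some q ∧ φ (some q) = some p := by
  classical
  let π : Equiv.Perm (Fin n × Fin 2) := Equiv.prodShear (Equiv.swap p.1 q.1)
    fun i => if i = p.1 ∨ i = q.1 then Equiv.swap p.2 q.2 else Equiv.refl _
  have hπ : ∀ r s, (π r).1 = (π s).1 ↔ r.1 = s.1 := fun r s =>
    (Equiv.swap p.1 q.1).injective.eq_iff
  refine ⟨autOfPermPreservingFst π hπ, ?_, ?_⟩ <;>
    simp [autOfPermPreservingFst, π, Equiv.prodShear]

end friendshipGraph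

theorem friendshipGraph_twoEDB_general (n : ℕ) : TwoEDB (friendshipGraph n) := by
  rintro (_ | p) (_ | q) hd
  · simp at hd
  · have := friendshipGraph.dist_none_le_one (some q)
    omega
  · have := friendshipGraph.dist_none_le_one (some p)
    rw [dist_comm] at hd
    omega
  · obtain ⟨φ, hp, hq⟩ := friendshipGraph.exists_iso_swap_some p q
    exact mCloser_comm_of_iso_swap φ hp hq

theorem friendshipGraph_twoEDB (n : ℕ) (hn : 1 < n) : TwoEDB (friendshipGraph n) :=
  friendshipGraph_twoEDB_general n
end

section
/- For every integer n > 4, the wheel graph W_n is 2-edge distance-balanced. -/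
open SimpleGraph

/-- The wheel graph `W n` on `n` vertices: a hub vertex `none` adjacent to every rim
vertex, together with a rim cycle on the `n - 1` vertices `some i` (`i : ZMod (n - 1)`),
where rim vertex `i` is adjacent to `i ± 1` (mod `n - 1`). -/
def wheelGraph (n : ℕ) : SimpleGraph (Option (ZMod (n - 1))) where
  Adj x y := x ≠ y ∧
    (x = none ∨ y = none ∨ ∃ i j, x = some i ∧ y = some j ∧ (i = j + 1 ∨ j = i + 1))
  symm := by
    constructor
    rintro x y ⟨hne, h | h | ⟨i, j, hx, hy, h⟩⟩
    · exact ⟨hne.symm, Or.inr (Or.inl h)⟩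
    · exact ⟨hne.symm, Or.inl h⟩
    · exact ⟨hne.symm, Or.inr (Or.inr ⟨j, i, hy, hx, h.symm⟩)⟩
  loopless := by constructor; rintro x ⟨hne, -⟩; exact hne rfl

/-!
Two vertices of a wheel at distance 2 are rim vertices `a` and `b`, and the reflection
`i ↦ a + b - i` of the rim, fixing the hub, is an automorphism exchanging them. Since `mCloser`
is invariant under graph isomorphisms, `mCloser a b = mCloser b a`.
-/

namespace SimpleGraph.Iso

variable {V W : Type*} {G : SimpleGraph V} {G' : SimpleGraph W}

lemma dist_map_le (e : G ≃g G') (u v : V) : G'.dist (e u) (e v) ≤ G.dist u v := by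
  by_cases huv : G.Reachable u v
  · obtain ⟨p, hp⟩ := huv.exists_walk_length_eq_dist
    calc G'.dist (e u) (e v) ≤ (p.map e.toHom).length := dist_le _
      _ = G.dist u v := by rw [p.length_map, hp]
  · rw [dist_eq_zero_of_not_reachable huv,
      dist_eq_zero_of_not_reachable (mt Iso.reachable_iff.mp huv)]

lemma dist_map_s13 (e : G ≃g G') (u v : V) : G'.dist (e u) (e v) = G.dist u v :=
  (e.dist_map_le u v).antisymm <| by simpa using e.symm.dist_map_le (e u) (e v)

lemma eDist_map (e : G ≃g G') (u : V) (f : Sym2 V) :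
    eDist G' (e u) (f.map e) = eDist G u f := by
  induction f using Sym2.ind with
  | _ x y => simp [eDist, dist_map_s13]

lemma mCloser_map (e : G ≃g G') (g h : V) : mCloser G' (e g) (e h) = mCloser G g h := by
  have himage : Sym2.map e '' {f ∈ G.edgeSet | eDist G g f < eDist G h f} =
      {f ∈ G'.edgeSet | eDist G' (e g) f < eDist G' (e h) f} := by
    ext f
    obtain ⟨f, rfl⟩ : ∃ f', f'.map e = f := ⟨f.map e.symm, by simp [Sym2.map_map]⟩
    simp [(Sym2.map.injective e.injective).eq_iff, Iso.map_mem_edgeSet_iff, eDist_map]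
  rw [mCloser, mCloser, ← himage, Set.ncard_image_of_injective _ (Sym2.map.injective e.injective)]

end SimpleGraph.Iso

lemma twoEDB_of_exists_swap {V : Type*} {G : SimpleGraph V}
    (hswap : ∀ g h, G.dist g h = 2 → ∃ e : G ≃g G, e g = h ∧ e h = g) : TwoEDB G := by
  intro g h hgh
  obtain ⟨e, hg, hh⟩ := hswap g h hgh
  rw [← e.mCloser_map, hg, hh]

namespace wheelGraph

variable {n : ℕ}

lemma dist_none_le_one (x : Option (ZMod (n - 1))) : (wheelGraph n).dist none x ≤ 1 := by
  cases x with
  | none => simp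
  | some i =>
    have hadj : (wheelGraph n).Adj none (some i) := ⟨by simp, Or.inl rfl⟩
    exact (dist_eq_one_iff_adj.mpr hadj).le

lemma adj_some_some {i j : ZMod (n - 1)} :
    (wheelGraph n).Adj (some i) (some j) ↔ i ≠ j ∧ (i = j + 1 ∨ j = i + 1) := by
  simp [wheelGraph]

def reflection (n : ℕ) (c : ZMod (n - 1)) : wheelGraph n ≃g wheelGraph n where
  toEquiv := Equiv.optionCongr (Equiv.subLeft c)
  map_rel_iff' := by
    rintro (_ | i) (_ | j)
    · simp [wheelGraph]
    · simp [wheelGraph]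
    · simp [wheelGraph]
    · have hshift (x y : ZMod (n - 1)) : c - x = c - y + 1 ↔ y = x + 1 :=
        ⟨fun h => by linear_combination h, fun h => by linear_combination h⟩
      simp only [Equiv.optionCongr_apply, Option.map_some, Equiv.subLeft_apply, adj_some_some,
        ne_eq, sub_right_inj, hshift, or_comm]

@[simp]
lemma reflection_some (c i : ZMod (n - 1)) : reflection n c (some i) = some (c - i) := rfl

end wheelGraph

theorem wheelGraph_twoEDB_general (n : ℕ) : TwoEDB (wheelGraph n) := by
  refine twoEDB_of_exists_swap fun g h hgh => ?_
  match g, h with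
  | none, h => have := wheelGraph.dist_none_le_one h; omega
  | g, none => have := wheelGraph.dist_none_le_one g; rw [dist_comm] at hgh; omega
  | some a, some b => exact ⟨wheelGraph.reflection n (a + b), by simp, by simp⟩

theorem wheelGraph_twoEDB (n : ℕ) (hn : 4 < n) : TwoEDB (wheelGraph n) :=
  wheelGraph_twoEDB_general n
end
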